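/- In a finite connected weighted graph, for any two vertices i and j, the unique path between i and j in any maximum spanning tree is a maximin path; that is, its minimum edge weight equals the maximin affinity A*_ij. -/

import Mathlib

/-!
Cycle property: for every edge `uv` of `G`, each edge on the tree path from `u` to `v` weighs at
least `A uv`, since otherwise exchanging it for `uv` would give a heavier spanning tree. Replacing
each edge of a `G`-walk from `i` to `j` by the corresponding tree path therefore gives a tree walk
with no smaller bottleneck, and in a tree every walk from `i` to `j` uses all edges of the path.
So the bottleneck of the tree path dominates that of every `G`-walk, and being itself such a walk,
it is the maximin affinity.
-/

open SimpleGraph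

/-- The graph obtained from `G` by keeping only the edges of weight `≥ θ`. -/
def thresholded {V : Type*} (G : SimpleGraph V) (A : Sym2 V → ℝ) (θ : ℝ) :
    SimpleGraph V where
  Adj i j := G.Adj i j ∧ θ ≤ A s(i, j)
  symm := by
    constructor
    intro i j h
    exact ⟨h.1.symm, by rw [Sym2.eq_swap]; exact h.2⟩
  loopless := by constructor; intro i h; exact G.irrefl h.1

/-- The bottleneck (minimal edge weight) of a walk, with value `⊤` for the empty walk. -/
noncomputable def bottleneck {V : Type*} {G : SimpleGraph V} (A : Sym2 V → ℝ) {i j : V}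
    (p : G.Walk i j) : WithTop ℝ :=
  p.edges.foldr (fun e m => min (A e : WithTop ℝ) m) ⊤

/-- `T` is a maximum spanning tree of the weighted graph `(G, A)`: a spanning tree
maximizing the total edge weight among all spanning trees of `G`. -/
def IsMaxSpanningTree {V : Type*} [Fintype V] (G : SimpleGraph V) (A : Sym2 V → ℝ)
    (T : SimpleGraph V) : Prop :=
  T ≤ G ∧ T.IsTree ∧
    ∀ T' : SimpleGraph V, T' ≤ G → T'.IsTree →
      ∑ e ∈ (Set.toFinite T'.edgeSet).toFinset, A e ≤
        ∑ e ∈ (Set.toFinite T.edgeSet).toFinset, A e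

section Bottleneck

variable {V : Type*} {G : SimpleGraph V} (A : Sym2 V → ℝ)

theorem le_bottleneck_iff {u v : V} (p : G.Walk u v) (x : WithTop ℝ) :
    x ≤ bottleneck A p ↔ ∀ e ∈ p.edges, x ≤ (A e : WithTop ℝ) := by
  unfold bottleneck
  induction p.edges with
  | nil => simp
  | cons e l ih => simp [ih]

theorem bottleneck_le_of_mem_edges {u v : V} (p : G.Walk u v) {e : Sym2 V} (he : e ∈ p.edges) :
    bottleneck A p ≤ A e :=
  (le_bottleneck_iff A p _).1 le_rfl e he

theorem bottleneck_le_bottleneck_of_edges_subset {u v u' v' : V} {p : G.Walk u v}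
    {q : G.Walk u' v'} (h : p.edges ⊆ q.edges) : bottleneck A q ≤ bottleneck A p :=
  (le_bottleneck_iff A p _).2 fun _ he => bottleneck_le_of_mem_edges A q (h he)

@[simp]
theorem bottleneck_cons {u v w : V} (h : G.Adj u v) (p : G.Walk v w) :
    bottleneck A (Walk.cons h p) = min (A s(u, v) : WithTop ℝ) (bottleneck A p) := rfl

theorem bottleneck_append {u v w : V} (p : G.Walk u v) (q : G.Walk v w) :
    bottleneck A (p.append q) = min (bottleneck A p) (bottleneck A q) :=
  eq_of_forall_le_iff fun x => by
    simp only [le_bottleneck_iff, le_min_iff, Walk.edges_append, List.mem_append, or_imp,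
      forall_and]

@[simp]
theorem bottleneck_mapLe {H : SimpleGraph V} (hGH : G ≤ H) {u v : V} (p : G.Walk u v) :
    bottleneck A (p.mapLe hGH) = bottleneck A p := by
  simp [bottleneck]

end Bottleneck

namespace SimpleGraph

section TreeExchange

variable {V : Type*} {T : SimpleGraph V}

theorem edgeSet_sup_edge_deleteEdges {u v : V} (huv : u ≠ v) (e : Sym2 V) :
    ((T ⊔ edge u v).deleteEdges {e}).edgeSet = insert s(u, v) T.edgeSet \ {e} := by
  rw [edgeSet_deleteEdges, edgeSet_sup, edgeSet_edge_of_ne huv, Set.union_singleton]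

theorem IsAcyclic.edges_subset_edges_of_isPath (hT : T.IsAcyclic) {u v : V} {p : T.Walk u v}
    (hp : p.IsPath) (q : T.Walk u v) : p.edges ⊆ q.edges := by
  classical
  obtain rfl : p = q.bypass := congrArg Subtype.val <|
    (hT.subsingleton_path u v).elim ⟨p, hp⟩ ⟨q.bypass, q.bypass_isPath⟩
  exact q.edges_bypass_subset_edges

/-- The new edge closes a cycle through `e`, so `e` is no bridge, and the edge count is
unchanged. -/
theorem IsTree.isTree_sup_edge_deleteEdges [Finite V] (hT : T.IsTree) {u v : V} (huv : u ≠ v)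
    (hTuv : ¬T.Adj u v) {r : T.Walk u v} (hr : r.IsPath) {e : Sym2 V} (he : e ∈ r.edges) :
    ((T ⊔ edge u v).deleteEdges {e}).IsTree := by
  have heT : e ∈ T.edgeSet := r.edges_subset_edgeSet he
  have hfT : s(u, v) ∉ T.edgeSet := hTuv
  have hcycle : (Walk.cons (by simp [edge_adj, huv.symm]) (r.mapLe le_sup_left) :
      (T ⊔ edge u v).Walk v v).IsCycle := by
    rw [Walk.cons_isCycle_iff, Walk.edges_mapLe_eq_edges, Sym2.eq_swap]
    exact ⟨hr.mapLe _, fun h => hfT (r.edges_subset_edgeSet h)⟩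
  have hconn : ((T ⊔ edge u v).deleteEdges {e}).Connected := by
    induction e using Sym2.ind with
    | _ x y =>
      refine (hT.connected.mono le_sup_left).connected_delete_edge_of_not_isBridge fun hb => ?_
      exact hb.notMem_edges_of_isCycle hcycle (by simp [he])
  refine isTree_iff_connected_and_card.2 ⟨hconn, ?_⟩
  have hcard := (isTree_iff_connected_and_card.1 hT).2
  rw [edgeSet_sup_edge_deleteEdges huv, Nat.card_coe_set_eq,
    Set.ncard_sdiff_singleton_of_mem (Set.mem_insert_of_mem _ heT), Set.ncard_insert_of_notMem hfT,
    Nat.add_sub_cancel, ← Nat.card_coe_set_eq, hcard]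

end TreeExchange

end SimpleGraph

theorem Set.Finite.sum_toFinset_insert_sdiff_singleton {α M : Type*} [AddCommMonoid M]
    {s t : Set α} (hs : s.Finite) (ht : t.Finite) {a b : α} (ha : a ∉ s) (hb : b ∈ s)
    (hts : t = insert a s \ {b}) (f : α → M) :
    ∑ x ∈ ht.toFinset, f x + f b = ∑ x ∈ hs.toFinset, f x + f a := by
  classical
  have hab : a ≠ b := fun h => ha (h ▸ hb)
  have : ht.toFinset = insert a (hs.toFinset.erase b) := by
    ext x
    simp only [Set.Finite.mem_toFinset, hts, Set.mem_sdiff, Set.mem_insert_iff,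
      Set.mem_singleton_iff, Finset.mem_insert, Finset.mem_erase]
    grind
  rw [this, Finset.sum_insert (by simp [ha]), add_assoc, Finset.sum_erase_add _ _ (by simpa),
    add_comm]

section MaxSpanningTree

variable {V : Type*} [Fintype V] {G T : SimpleGraph V} {A : Sym2 V → ℝ}

theorem IsMaxSpanningTree.weight_le_bottleneck (hT : IsMaxSpanningTree G A T) {u v : V}
    (huv : G.Adj u v) {r : T.Walk u v} (hr : r.IsPath) :
    (A s(u, v) : WithTop ℝ) ≤ bottleneck A r := by
  obtain ⟨hTG, htree, hmax⟩ := hT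
  refine (le_bottleneck_iff A r _).2 fun e he => ?_
  by_cases hTuv : T.Adj u v
  · have hr' : r = Walk.cons hTuv Walk.nil :=
      (htree.existsUnique_path u v).unique hr (by simp [hTuv.ne])
    rw [hr', Walk.edges_cons, Walk.edges_nil, List.mem_singleton] at he
    rw [he]
  by_contra! hlt
  have hT'G : (T ⊔ edge u v).deleteEdges {e} ≤ G :=
    (deleteEdges_le _).trans (sup_le hTG ((edge_le_iff G).2 (Or.inr huv)))
  have hweight := hmax _ hT'G (htree.isTree_sup_edge_deleteEdges huv.ne hTuv hr he)
  have hexchange := (Set.toFinite T.edgeSet).sum_toFinset_insert_sdiff_singleton (Set.toFinite _)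
    hTuv (r.edges_subset_edgeSet he) (edgeSet_sup_edge_deleteEdges huv.ne e) A
  have : A e < A s(u, v) := by exact_mod_cast hlt
  linarith

theorem IsMaxSpanningTree.exists_walk_bottleneck_le (hT : IsMaxSpanningTree G A T) {u v : V}
    (q : G.Walk u v) : ∃ r : T.Walk u v, bottleneck A q ≤ bottleneck A r := by
  induction q with
  | nil => exact ⟨Walk.nil, le_rfl⟩
  | cons h _ ih =>
    obtain ⟨r, hr⟩ := ih
    obtain ⟨p, hp⟩ := hT.2.1.connected.exists_isPath _ _
    refine ⟨p.append r, ?_⟩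
    rw [bottleneck_cons, bottleneck_append]
    exact min_le_min (hT.weight_le_bottleneck h hp) hr

theorem IsMaxSpanningTree.bottleneck_le_of_isPath (hT : IsMaxSpanningTree G A T) {u v : V}
    (q : G.Walk u v) {p : T.Walk u v} (hp : p.IsPath) : bottleneck A q ≤ bottleneck A p := by
  obtain ⟨r, hr⟩ := hT.exists_walk_bottleneck_le q
  exact hr.trans <| bottleneck_le_bottleneck_of_edges_subset A <|
    hT.2.1.isAcyclic.edges_subset_edges_of_isPath hp r

end MaxSpanningTree

theorem stmt_4_general {V : Type*} [Fintype V] (G : SimpleGraph V)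
    (A : Sym2 V → ℝ) (T : SimpleGraph V) (hT : IsMaxSpanningTree G A T)
    (i j : V) (p : T.Walk i j) (hp : p.IsPath) (Astar : WithTop ℝ)
    (hA : IsGreatest {x | ∃ q : G.Walk i j, bottleneck A q = x} Astar) :
    bottleneck A p = Astar := by
  refine le_antisymm (hA.2 ⟨p.mapLe hT.1, bottleneck_mapLe A hT.1 p⟩) ?_
  obtain ⟨q, rfl⟩ := hA.1
  exact hT.bottleneck_le_of_isPath q hp

/-- The unique path between `i` and `j` in any maximum spanning tree is a maximin
path: its bottleneck equals the maximin affinity `A*_ij` in `G`. -/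
theorem stmt_4 {V : Type*} [Fintype V] (G : SimpleGraph V) (hG : G.Connected)
    (A : Sym2 V → ℝ) (T : SimpleGraph V) (hT : IsMaxSpanningTree G A T)
    (i j : V) (p : T.Walk i j) (hp : p.IsPath) (Astar : WithTop ℝ)
    (hA : IsGreatest {x | ∃ q : G.Walk i j, bottleneck A q = x} Astar) :
    bottleneck A p = Astar :=
  stmt_4_general G A T hT i j p hp Astar hA
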